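/- Let $\lambda : [0, R) \to \mathbb{R}$ be a locally Lipschitz function, differentiable almost everywhere, satisfying $\lambda'(s) + \lambda(s)^2 \le -1$ at every point of differentiability. Then for all $s \in [0,R)$ with $1 + \lambda(0)\tan s > 0$, we have $\lambda(s) \le \frac{\lambda(0) - \tan s}{1 + \lambda(0)\tan s}$. In particular $R \le \frac{\pi}{2} + \arctan \lambda(0)$. -/

import Mathlib

/-!
With `θ s = arctan (l s) + s`, the Riccati inequality says exactly that
`θ' = l' / (1 + l ^ 2) + 1 ≤ 0` wherever `l` is differentiable. Since `l` is Lipschitz on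
compact intervals, `θ` is absolutely continuous there, hence nonincreasing by the fundamental
theorem of calculus. Thus `arctan (l s) ≤ arctan (l 0) - s`, i.e.
`l s ≤ tan (arctan (l 0) - s)`, which is the comparison function; and as
`arctan (l s) > -π / 2`, no `s ≥ π / 2 + arctan (l 0)` lies in `[0, R)`.
-/

open Real MeasureTheory Set NNReal

theorem AbsolutelyContinuousOnInterval.le_of_ae_deriv_nonpos {f : ℝ → ℝ} {a b : ℝ}
    (hf : AbsolutelyContinuousOnInterval f a b) (hab : a ≤ b)
    (hd : ∀ᵐ x, x ∈ Icc a b → deriv f x ≤ 0) : f b ≤ f a := by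
  have hint : 0 ≤ ∫ x in a..b, -deriv f x :=
    intervalIntegral.integral_nonneg_of_ae_restrict hab <|
      (ae_restrict_iff' measurableSet_Icc).2 <| hd.mono fun x hx hxI => neg_nonneg.2 (hx hxI)
  rw [intervalIntegral.integral_neg, hf.integral_deriv_eq_sub] at hint
  linarith

theorem Real.lipschitzWith_arctan : LipschitzWith 1 arctan := by
  refine lipschitzWith_of_nnnorm_deriv_le differentiable_arctan fun x => ?_
  rw [← NNReal.coe_le_coe, coe_nnnorm, deriv_arctan, norm_of_nonneg (by positivity),
    NNReal.coe_one]
  exact div_le_one_of_le₀ (by nlinarith) (by positivity)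

theorem deriv_arctan_comp_add_id_nonpos {l : ℝ → ℝ} {x : ℝ} (hl : DifferentiableAt ℝ l x)
    (h : deriv l x + l x ^ 2 ≤ -1) : deriv (fun t => arctan (l t) + t) x ≤ 0 := by
  have hθ : HasDerivAt (fun t => arctan (l t) + t) (1 / (1 + l x ^ 2) * deriv l x + 1) x :=
    ((hasDerivAt_arctan (l x)).comp x hl.hasDerivAt).add (hasDerivAt_id x)
  have hpos : 0 < 1 + l x ^ 2 := by positivity
  rw [hθ.deriv, show 1 / (1 + l x ^ 2) * deriv l x + 1 = (deriv l x + l x ^ 2 + 1) / (1 + l x ^ 2)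
    by field_simp; ring]
  exact div_nonpos_of_nonpos_of_nonneg (by linarith) hpos.le

theorem arctan_add_le_of_deriv_add_sq_le {l : ℝ → ℝ} {a b : ℝ} {K : ℝ≥0} (hab : a ≤ b)
    (hl : LipschitzOnWith K l (Icc a b))
    (h : ∀ x ∈ Icc a b, DifferentiableAt ℝ l x → deriv l x + l x ^ 2 ≤ -1) :
    arctan (l b) + b ≤ arctan (l a) + a := by
  rw [← uIcc_of_le hab] at hl
  have hθ : LipschitzOnWith (1 * K + 1) (fun t => arctan (l t) + t) (uIcc a b) :=
    (lipschitzWith_arctan.comp_lipschitzOnWith hl).add LipschitzWith.id.lipschitzOnWith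
  refine hθ.absolutelyContinuousOnInterval.le_of_ae_deriv_nonpos hab ?_
  filter_upwards [hl.absolutelyContinuousOnInterval.ae_differentiableAt] with x hdiff hx
  have hdx := hdiff (by rwa [uIcc_of_le hab])
  exact deriv_arctan_comp_add_id_nonpos hdx (h x hx hdx)

theorem le_div_of_arctan_add_le {c s y : ℝ} (hs : 0 ≤ s) (h : arctan y + s ≤ arctan c) :
    y ≤ (c - tan s) / (1 + c * tan s) := by
  by_cases hcos : cos s = 0
  · -- junk value: here `tan s = sin s / 0 = 0`
    rw [tan_eq_sin_div_cos, hcos, div_zero, sub_zero, mul_zero, add_zero, div_one]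
    exact arctan_le_arctan_iff.1 (by linarith)
  · have hlo : -(π / 2) < arctan c - s := by linarith [neg_pi_div_two_lt_arctan y]
    have hhi : arctan c - s < π / 2 := by linarith [arctan_lt_pi_div_two c]
    have hy : y ≤ tan (arctan c - s) :=
      arctan_le_arctan_iff.1 (by rw [arctan_tan hlo hhi]; linarith)
    rwa [tan_sub' ⟨arctan_ne_mul_pi_div_two, fun k hk => hcos (cos_eq_zero_iff.2 ⟨k, hk⟩)⟩,
      tan_arctan] at hy

theorem stmt_6_general (R : ℝ) (l : ℝ → ℝ)
    (hlip : LocallyLipschitz l)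
    (hineq : ∀ s ∈ Set.Ico (0 : ℝ) R, DifferentiableAt ℝ l s →
      deriv l s + (l s) ^ 2 ≤ -1) :
    (∀ s ∈ Set.Ico (0 : ℝ) R, 1 + l 0 * Real.tan s > 0 →
      l s ≤ (l 0 - Real.tan s) / (1 + l 0 * Real.tan s)) ∧
    R ≤ π / 2 + Real.arctan (l 0) := by
  have hθ : ∀ s ∈ Ico 0 R, arctan (l s) + s ≤ arctan (l 0) := fun s hs => by
    obtain ⟨K, hK⟩ :=
      hlip.locallyLipschitzOn.exists_lipschitzOnWith_of_compact (isCompact_Icc (a := 0) (b := s))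
    simpa using arctan_add_le_of_deriv_add_sq_le hs.1 hK
      fun x hx => hineq x ⟨hx.1, hx.2.trans_lt hs.2⟩
  refine ⟨fun s hs _ => le_div_of_arctan_add_le hs.1 (hθ s hs), ?_⟩
  by_contra! hR
  have := hθ _ ⟨by linarith [neg_pi_div_two_lt_arctan (l 0)], hR⟩
  linarith [neg_pi_div_two_lt_arctan (l (π / 2 + arctan (l 0)))]

theorem stmt_6 (R : ℝ) (hR : 0 < R) (l : ℝ → ℝ)
    (hlip : LocallyLipschitz l)
    (hae : ∀ᵐ s ∂(volume.restrict (Set.Ico 0 R)), DifferentiableAt ℝ l s)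
    (hineq : ∀ s ∈ Set.Ico (0 : ℝ) R, DifferentiableAt ℝ l s →
      deriv l s + (l s) ^ 2 ≤ -1) :
    (∀ s ∈ Set.Ico (0 : ℝ) R, 1 + l 0 * Real.tan s > 0 →
      l s ≤ (l 0 - Real.tan s) / (1 + l 0 * Real.tan s)) ∧
    R ≤ π / 2 + Real.arctan (l 0) :=
  stmt_6_general R l hlip hineq
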